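/- Let L > 0, D > 0, δ ≥ 0, q ∈ [0,2), N a positive integer, and F a real number. If F ≤ (L + qρ)·D/N + (3/2)·(2−q)·δ^{2/(2−q)}·ρ^{−q/(2−q)} holds for every ρ > 0, then F ≤ LD/N + 3·(√(2D/3))^q·δ/N^{q/2}. -/

import Mathlib

/-!
For `δ > 0` the bound is evaluated at the minimiser `ρ* = δ t^{-(2-q)/2}` of the right-hand side,
where `t = 2D/(3N)`: there both `ρ`-dependent terms become multiples of `δ t^{q/2}`, namely
`(3/2) q δ t^{q/2}` and `(3/2) (2-q) δ t^{q/2}`, which add up to `3 δ t^{q/2}`.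
For `δ = 0` the bound is affine in `ρ`, and letting `ρ → 0⁺` gives the claim.
-/

open Filter Topology

lemma le_of_forall_pos_le_add_mul {F a b : ℝ} (h : ∀ ρ > 0, F ≤ a + b * ρ) : F ≤ a := by
  have hlim : Tendsto (fun ρ => a + b * ρ) (𝓝[>] 0) (𝓝 a) := by
    have hcont : Continuous fun ρ : ℝ => a + b * ρ := by fun_prop
    simpa using (hcont.tendsto 0).mono_left nhdsWithin_le_nhds
  exact ge_of_tendsto hlim (eventually_nhdsWithin_of_forall h)

namespace Real

lemma sqrt_rpow_div_rpow_half {x y : ℝ} (hx : 0 ≤ x) (hy : 0 ≤ y) (q : ℝ) :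
    √x ^ q / y ^ (q / 2) = (x / y) ^ (q / 2) := by
  rw [sqrt_eq_rpow, ← rpow_mul hx, div_rpow hx hy, one_div_mul_eq_div]

lemma rpow_two_div_sub_mul_rpow_neg_div_sub {δ t q : ℝ} (hδ : 0 < δ) (ht : 0 < t) (hq : q ≠ 2) :
    δ ^ (2 / (2 - q)) * (δ * t ^ (-((2 - q) / 2))) ^ (-(q / (2 - q))) = δ * t ^ (q / 2) := by
  have hq' : 2 - q ≠ 0 := sub_ne_zero.mpr hq.symm
  have hδexp : 2 / (2 - q) + -(q / (2 - q)) = 1 := by field_simp; ring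
  have htexp : -((2 - q) / 2) * -(q / (2 - q)) = q / 2 := by field_simp
  rw [mul_rpow hδ.le (rpow_nonneg ht.le _), ← rpow_mul ht.le, ← mul_assoc, ← rpow_add hδ,
    hδexp, htexp, rpow_one]

lemma rpow_neg_sub_div_two_mul_self {t : ℝ} (ht : 0 < t) (q : ℝ) :
    t ^ (-((2 - q) / 2)) * t = t ^ (q / 2) := by
  rw [← rpow_add_one ht.ne']
  ring_nf

end Real

theorem stmt_16_general (L D δ q F : ℝ) (N : ℕ) (hD : 0 < D) (hδ : 0 ≤ δ)
    (hq2 : q < 2) (hN : 0 < N)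
    (h : ∀ ρ > (0 : ℝ),
      F ≤ (L + q * ρ) * D / N +
        3 / 2 * (2 - q) * δ ^ (2 / (2 - q)) * ρ ^ (-(q / (2 - q)))) :
    F ≤ L * D / N + 3 * Real.sqrt (2 * D / 3) ^ q * δ / (N : ℝ) ^ (q / 2) := by
  have hN' : (0 : ℝ) < N := by exact_mod_cast hN
  set t : ℝ := 2 * D / 3 / N with ht_def
  have ht : 0 < t := by positivity
  have hDN : D / N = 3 / 2 * t := by rw [ht_def]; field_simp
  have hrhs : 3 * Real.sqrt (2 * D / 3) ^ q * δ / (N : ℝ) ^ (q / 2) = 3 * (δ * t ^ (q / 2)) := by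
    rw [mul_right_comm, mul_div_assoc, Real.sqrt_rpow_div_rpow_half (by positivity) hN'.le]
    ring
  rw [hrhs]
  rcases hδ.eq_or_lt with rfl | hδ
  · refine le_of_forall_pos_le_add_mul (b := q * (D / N)) fun ρ hρ => ?_
    have hρbound := h ρ hρ
    rw [Real.zero_rpow (div_ne_zero two_ne_zero (by linarith))] at hρbound
    calc F ≤ (L + q * ρ) * D / N + 3 / 2 * (2 - q) * 0 * ρ ^ (-(q / (2 - q))) := hρbound
      _ = L * D / N + 3 * (0 * t ^ (q / 2)) + q * (D / N) * ρ := by ring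
  · set ρ := δ * t ^ (-((2 - q) / 2)) with hρ_def
    calc F ≤ (L + q * ρ) * D / N + 3 / 2 * (2 - q) * δ ^ (2 / (2 - q)) * ρ ^ (-(q / (2 - q))) :=
          h ρ (by positivity)
      _ = L * D / N + 3 / 2 * q * (ρ * t) +
            3 / 2 * (2 - q) * (δ ^ (2 / (2 - q)) * ρ ^ (-(q / (2 - q)))) := by
          rw [show (L + q * ρ) * D / N = L * D / N + q * ρ * (D / N) by ring, hDN]
          ring
      _ = L * D / N + 3 * (δ * t ^ (q / 2)) := by
          rw [hρ_def, mul_assoc δ, Real.rpow_neg_sub_div_two_mul_self ht,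
            Real.rpow_two_div_sub_mul_rpow_neg_div_sub hδ ht hq2.ne]
          ring

/-- Optimization over the auxiliary parameter `ρ` in the proof of Theorem 7.1. -/
theorem stmt_16 (L D δ q F : ℝ) (N : ℕ) (hL : 0 < L) (hD : 0 < D) (hδ : 0 ≤ δ)
    (hq0 : 0 ≤ q) (hq2 : q < 2) (hN : 0 < N)
    (h : ∀ ρ > (0 : ℝ),
      F ≤ (L + q * ρ) * D / N +
        3 / 2 * (2 - q) * δ ^ (2 / (2 - q)) * ρ ^ (-(q / (2 - q)))) :
    F ≤ L * D / N + 3 * Real.sqrt (2 * D / 3) ^ q * δ / (N : ℝ) ^ (q / 2) :=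
  stmt_16_general L D δ q F N hD hδ hq2 hN h
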